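/- Define f : [0,1] → 2^[0,1] by f(x) = {x/3} for 0 ≤ x < 1/2 and f(x) = {x/3, 2x−1} for 1/2 ≤ x ≤ 1. Then f is upper semicontinuous, surjective (every y ∈ [0,1] lies in f(x) for some x), its graph is connected, but f does not have the Weak Intermediate Value Property. -/

import Mathlib

open Set

/-- Graph of a set-valued function on [0,1]. -/
def SVFGraph (f : ℝ → Set ℝ) : Set (ℝ × ℝ) :=
  {p | p.1 ∈ Icc (0:ℝ) 1 ∧ p.2 ∈ f p.1}

/-- f has nonempty compact values contained in [0,1]. -/
def SV (f : ℝ → Set ℝ) : Prop :=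
  ∀ x ∈ Icc (0:ℝ) 1, (f x).Nonempty ∧ IsCompact (f x) ∧ f x ⊆ Icc (0:ℝ) 1

/-- Upper semicontinuity on [0,1]. -/
def USC (f : ℝ → Set ℝ) : Prop :=
  ∀ x ∈ Icc (0:ℝ) 1, ∀ U : Set ℝ, IsOpen U → f x ⊆ U →
    ∃ V : Set ℝ, IsOpen V ∧ x ∈ V ∧ ∀ v ∈ V ∩ Icc (0:ℝ) 1, f v ⊆ U

/-- Weak Intermediate Value Property. -/
def WIVP (f : ℝ → Set ℝ) : Prop :=
  ∀ x₁ ∈ Icc (0:ℝ) 1, ∀ x₂ ∈ Icc (0:ℝ) 1, x₁ ≠ x₂ → ∀ y₁ ∈ f x₁,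
    ∃ y₂ ∈ f x₂, ∀ y ∈ uIcc y₁ y₂, ∃ x ∈ uIcc x₁ x₂, y ∈ f x

/-- Intermediate Value Property. -/
def IVP (f : ℝ → Set ℝ) : Prop :=
  ∀ x₁ ∈ Icc (0:ℝ) 1, ∀ x₂ ∈ Icc (0:ℝ) 1, x₁ ≠ x₂ → ∀ y₁ ∈ f x₁, ∀ y₂ ∈ f x₂, y₁ ≠ y₂ →
    ∀ y ∈ Ioo (min y₁ y₂) (max y₁ y₂), ∃ x ∈ Ioo (min x₁ x₂) (max x₁ x₂), y ∈ f x

/-- The example of Nall. -/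
noncomputable def fNall (x : ℝ) : Set ℝ :=
  if x < 1/2 then {x/3} else {x/3, 2*x - 1}

/-! The graph of `fNall` is the segment `y = x/3` over `[0,1]` together with the segment
`y = 2x - 1` over `[1/2,1]`; the two meet at `(3/5, 1/5)`, so the graph is connected, and both
branches are continuous on closed domains, so `fNall` is upper semicontinuous. The value `0` at
`x = 1/2` cannot be joined to the only value `2/15` at `x = 2/5`: over `[2/5,1/2]` the branch
`x/3` stays at least `2/15` and the branch `2x - 1` only exists at `1/2`, with value `0`, so `1/15`
is skipped. -/

lemma mem_fNall {x y : ℝ} : y ∈ fNall x ↔ y = x / 3 ∨ (1/2 ≤ x ∧ y = 2*x - 1) := by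
  unfold fNall
  split_ifs with h
  · have : ¬ 1/2 ≤ x := not_le.2 h
    simp only [mem_singleton_iff, this, false_and, or_false]
  · have : 1/2 ≤ x := not_lt.1 h
    simp only [mem_insert_iff, mem_singleton_iff, this, true_and]

lemma usc_of_mem_iff {f : ℝ → Set ℝ} {g h : ℝ → ℝ} {C : Set ℝ} (hg : Continuous g)
    (hh : Continuous h) (hC : IsClosed C) (hf : ∀ x y, y ∈ f x ↔ y = g x ∨ (x ∈ C ∧ y = h x)) :
    USC f := by
  intro x _ U hU hfU
  have hgU : g x ∈ U := hfU ((hf x _).2 (Or.inl rfl))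
  have hhU : x ∈ C → h x ∈ U := fun hx => hfU ((hf x _).2 (Or.inr ⟨hx, rfl⟩))
  refine ⟨g ⁻¹' U ∩ (h ⁻¹' U ∪ Cᶜ), (hU.preimage hg).inter ((hU.preimage hh).union hC.isOpen_compl),
    ⟨hgU, ?_⟩, ?_⟩
  · by_cases hx : x ∈ C
    · exact Or.inl (hhU hx)
    · exact Or.inr hx
  · rintro v ⟨⟨hgv, hhv⟩, _⟩ y hy
    rcases (hf v y).1 hy with rfl | ⟨hvC, rfl⟩
    · exact hgv
    · exact hhv.resolve_right (not_not.2 hvC)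

lemma usc_fNall : USC fNall :=
  usc_of_mem_iff (g := fun x => x / 3) (h := fun x => 2*x - 1) (by fun_prop) (by fun_prop)
    isClosed_Ici fun _ _ => mem_fNall

lemma mem_fNall_add_one_div_two {y : ℝ} (hy : 0 ≤ y) : y ∈ fNall ((y + 1) / 2) :=
  mem_fNall.2 (Or.inr ⟨by linarith, by ring⟩)

lemma svfGraph_fNall : SVFGraph fNall =
    (fun x : ℝ => (x, x/3)) '' Icc 0 1 ∪ (fun x : ℝ => (x, 2*x - 1)) '' Icc (1/2) 1 := by
  ext ⟨a, b⟩
  simp only [SVFGraph, mem_ofPred_eq, mem_fNall, mem_union, mem_image, Prod.mk.injEq, mem_Icc]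
  constructor
  · rintro ⟨ha, rfl | ⟨ha', rfl⟩⟩
    · exact Or.inl ⟨a, ha, rfl, rfl⟩
    · exact Or.inr ⟨a, ⟨ha', ha.2⟩, rfl, rfl⟩
  · rintro (⟨x, hx, rfl, rfl⟩ | ⟨x, hx, rfl, rfl⟩)
    · exact ⟨hx, Or.inl rfl⟩
    · exact ⟨⟨by linarith [hx.1], hx.2⟩, Or.inr ⟨hx.1, rfl⟩⟩

lemma isConnected_svfGraph_fNall : IsConnected (SVFGraph fNall) := by
  rw [svfGraph_fNall]
  refine IsConnected.union ⟨(3/5, 1/5), ⟨3/5, ?_, ?_⟩, ⟨3/5, ?_, ?_⟩⟩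
    ((isConnected_Icc (by norm_num)).image _ (by fun_prop))
    ((isConnected_Icc (by norm_num)).image _ (by fun_prop)) <;>
    norm_num [Prod.ext_iff]

lemma not_wivp_fNall : ¬ WIVP fNall := by
  intro h
  obtain ⟨y₂, hy₂, hall⟩ := h (1/2) (by norm_num) (2/5) (by norm_num) (by norm_num) 0
    (mem_fNall.2 (Or.inr ⟨le_rfl, by norm_num⟩))
  have hy₂ : y₂ = 2/15 := by
    rcases mem_fNall.1 hy₂ with rfl | ⟨h, _⟩
    · norm_num
    · norm_num at h
  subst hy₂
  obtain ⟨x, hx, hyx⟩ := hall (1/15) (by rw [mem_uIcc]; norm_num)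
  rw [uIcc_of_ge (by norm_num)] at hx
  rcases mem_fNall.1 hyx with h | ⟨_, h⟩ <;> linarith [hx.1, hx.2]

theorem stmt8 :
    USC fNall ∧
    (∀ y ∈ Icc (0:ℝ) 1, ∃ x ∈ Icc (0:ℝ) 1, y ∈ fNall x) ∧
    IsConnected (SVFGraph fNall) ∧
    ¬ WIVP fNall :=
  ⟨usc_fNall,
    fun y hy => ⟨(y + 1) / 2, ⟨by linarith [hy.1], by linarith [hy.2]⟩,
      mem_fNall_add_one_div_two hy.1⟩,
    isConnected_svfGraph_fNall, not_wivp_fNall⟩
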